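/- arXiv:2404.09048 — 5 statements merged into one kernel-verified Lean document; each statement's English description precedes it below -/
import Mathlib

section
/- For every real p with 0 < p < 1 and all real x, y with 1 ≤ y ≤ x ≤ y + 1, one has log(1 - (1-p)^x) - log(1 - (1-p)^y) ≤ log(2 - p). -/
/-- For every real `p ∈ (0,1)` and all reals `1 ≤ y ≤ x ≤ y + 1`,
`log(1 - (1-p)^x) - log(1 - (1-p)^y) ≤ log(2 - p)`. -/
theorem log_success_increment_bound (p : ℝ) (hp0 : 0 < p) (hp1 : p < 1)
    (x y : ℝ) (hy : 1 ≤ y) (hyx : y ≤ x) (hxy : x ≤ y + 1) :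
    Real.log (1 - (1 - p) ^ x) - Real.log (1 - (1 - p) ^ y) ≤ Real.log (2 - p) := by
  set q : ℝ := 1 - p with hq
  have hq0 : 0 < q := by linarith
  have hq1 : q < 1 := by linarith
  have hx0 : 0 < x := by linarith
  have hy0 : 0 < y := by linarith
  have hqx1 : q ^ x < 1 := Real.rpow_lt_one hq0.le hq1 hx0
  have hqy1 : q ^ y < 1 := Real.rpow_lt_one hq0.le hq1 hy0
  have hqx0 : 0 < q ^ x := Real.rpow_pos_of_pos hq0 x
  have hqy0 : 0 < q ^ y := Real.rpow_pos_of_pos hq0 y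
  -- q^(y+1) ≤ q^x
  have h1 : q ^ (y + 1) ≤ q ^ x :=
    Real.rpow_le_rpow_of_exponent_ge hq0 hq1.le hxy
  have h1' : q * q ^ y ≤ q ^ x := by
    have : q ^ (y + 1) = q ^ y * q ^ (1 : ℝ) := Real.rpow_add hq0 y 1
    rw [this, Real.rpow_one] at h1
    linarith [h1]
  -- q^y ≤ q
  have h2 : q ^ y ≤ q := by
    have := Real.rpow_le_rpow_of_exponent_ge hq0 hq1.le hy
    rwa [Real.rpow_one] at this
  -- key inequality
  have hkey : 1 - q ^ x ≤ (1 + q) * (1 - q ^ y) := by nlinarith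
  have h2p : (2 : ℝ) - p = 1 + q := by rw [hq]; ring
  have hpos : 0 < (1 + q) * (1 - q ^ y) := mul_pos (by linarith) (by linarith)
  have hlog : Real.log (1 - q ^ x) ≤ Real.log ((1 + q) * (1 - q ^ y)) :=
    Real.log_le_log (by linarith) hkey
  rw [Real.log_mul (by linarith : (0:ℝ) < 1 + q).ne' (by linarith : (0:ℝ) < 1 - q ^ y).ne'] at hlog
  rw [h2p]
  linarith
end

section
/- Let E be a finite set, K a natural number with |E| ≤ K, p_min a real with 0 < p_min < 1, p : E → ℝ with p_min ≤ p_e < 1 for all e, and V ≥ 0. Let n, ñ : E → ℝ satisfy 1 ≤ n_e ≤ ñ_e ≤ n_e + 1 for all e ∈ E. Then V·∑_{e∈E} ( log(1 - (1-p_e)^{ñ_e}) - log(1 - (1-p_e)^{n_e}) ) ≤ V·K·log(2 - p_min). -/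
/-- Inequalities (10)–(12) in Proposition 2: summing the per-edge increment bound,
the rounding loss in the utility term is at most `V·K·log(2 - p_min)`. -/
theorem rounding_utility_gap {E : Type*} [Fintype E] (K : ℕ) (hK : Fintype.card E ≤ K)
    (pmin : ℝ) (hpmin0 : 0 < pmin) (hpmin1 : pmin < 1)
    (p : E → ℝ) (hp : ∀ e, pmin ≤ p e ∧ p e < 1)
    (V : ℝ) (hV : 0 ≤ V)
    (n ntilde : E → ℝ) (hn : ∀ e, 1 ≤ n e ∧ n e ≤ ntilde e ∧ ntilde e ≤ n e + 1) :
    V * ∑ e, (Real.log (1 - (1 - p e) ^ ntilde e) - Real.log (1 - (1 - p e) ^ n e))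
      ≤ V * K * Real.log (2 - pmin) := by
  have hlog : ∀ e, Real.log (1 - (1 - p e) ^ ntilde e) - Real.log (1 - (1 - p e) ^ n e)
      ≤ Real.log (2 - pmin) := by
    intro e
    obtain ⟨hp1, hp2⟩ := hp e
    obtain ⟨hn1, hn2, hn3⟩ := hn e
    set q := 1 - p e with hq
    have hq0 : 0 < q := by simp [hq]; linarith
    have hq1 : q < 1 := by simp [hq]; linarith
    have hqpm : q ≤ 1 - pmin := by simp [hq]; linarith
    have hqn1 : q ^ n e < 1 :=
      Real.rpow_lt_one hq0.le hq1 (by linarith)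
    have hpos : 0 < 1 - q ^ n e := by linarith
    -- q^ñ ≥ q^(n+1)
    have h1 : q ^ (n e + 1) ≤ q ^ ntilde e :=
      Real.rpow_le_rpow_of_exponent_ge hq0 hq1.le hn3
    have hqnq : q ^ n e ≤ q := by
      have := Real.rpow_le_rpow_of_exponent_ge hq0 hq1.le hn1
      simpa using this
    have hadd : q ^ (n e + 1) = q ^ n e * q := by
      rw [Real.rpow_add hq0, Real.rpow_one]
    have hkey : 1 - q ^ ntilde e ≤ (2 - pmin) * (1 - q ^ n e) := by
      have h2 : 1 - q ^ ntilde e ≤ 1 - q ^ (n e + 1) := by linarith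
      have h3 : 1 - q ^ (n e + 1) ≤ (1 + q) * (1 - q ^ n e) := by
        rw [hadd]; nlinarith
      have h4 : (1 + q) * (1 - q ^ n e) ≤ (2 - pmin) * (1 - q ^ n e) := by
        nlinarith
      linarith
    have hpos2 : 0 < 1 - q ^ ntilde e := by
      have : q ^ ntilde e < 1 := Real.rpow_lt_one hq0.le hq1 (by linarith)
      linarith
    have := Real.log_le_log hpos2 hkey
    rw [Real.log_mul (by linarith) hpos.ne'] at this
    linarith
  have hsum : ∑ e, (Real.log (1 - (1 - p e) ^ ntilde e) - Real.log (1 - (1 - p e) ^ n e))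
      ≤ (K : ℝ) * Real.log (2 - pmin) := by
    calc ∑ e, (Real.log (1 - (1 - p e) ^ ntilde e) - Real.log (1 - (1 - p e) ^ n e))
        ≤ ∑ _e : E, Real.log (2 - pmin) := Finset.sum_le_sum fun e _ => hlog e
      _ = (Fintype.card E : ℝ) * Real.log (2 - pmin) := by
          simp [Finset.sum_const, mul_comm]
      _ ≤ (K : ℝ) * Real.log (2 - pmin) := by
          apply mul_le_mul_of_nonneg_right (by exact_mod_cast hK)
          apply Real.log_nonneg; linarith
  calc V * ∑ e, (Real.log (1 - (1 - p e) ^ ntilde e) - Real.log (1 - (1 - p e) ^ n e))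
      ≤ V * ((K : ℝ) * Real.log (2 - pmin)) := mul_le_mul_of_nonneg_left hsum hV
    _ = V * K * Real.log (2 - pmin) := by ring
end

section
/- Let E be a finite set, K a natural number with |E| ≤ K, p_min real with 0 < p_min < 1, p : E → ℝ with p_min ≤ p_e < 1 for all e, V ≥ 0 and q ≥ 0. Define F(m) = V·∑_{e∈E} log(1 - (1-p_e)^{m_e}) - q·∑_{e∈E} m_e. Let S be any set of allocations m : E → ℝ with m_e ≥ 1 for all e, let ñ ∈ S satisfy F(m) ≤ F(ñ) for all m ∈ S, let n^opt ∈ S, and let n : E → ℝ satisfy 1 ≤ n_e ≤ ñ_e ≤ n_e + 1 for all e and ∑_{e∈E} n_e ≤ ∑_{e∈E} ñ_e. Then F(n^opt) - F(n) ≤ V·K·log(2 - p_min). -/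
/-- Proposition 2: the sub-optimality gap of the continuous-relaxation-and-rounding
qubit allocation is at most `Δ = V·K·log(2 - p_min)`. -/
theorem rounding_suboptimality_gap {E : Type*} [Fintype E] (K : ℕ) (hK : Fintype.card E ≤ K)
    (pmin : ℝ) (hpmin0 : 0 < pmin) (hpmin1 : pmin < 1)
    (p : E → ℝ) (hp : ∀ e, pmin ≤ p e ∧ p e < 1)
    (V q : ℝ) (hV : 0 ≤ V) (hq : 0 ≤ q)
    (F : (E → ℝ) → ℝ)
    (hF : ∀ m : E → ℝ,
      F m = V * ∑ e, Real.log (1 - (1 - p e) ^ m e) - q * ∑ e, m e)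
    (S : Set (E → ℝ)) (hS : ∀ m ∈ S, ∀ e, 1 ≤ m e)
    (ntilde : E → ℝ) (hntildeS : ntilde ∈ S) (hntildeopt : ∀ m ∈ S, F m ≤ F ntilde)
    (nopt : E → ℝ) (hnopt : nopt ∈ S)
    (n : E → ℝ) (hround : ∀ e, 1 ≤ n e ∧ n e ≤ ntilde e ∧ ntilde e ≤ n e + 1)
    (hcost : ∑ e, n e ≤ ∑ e, ntilde e) :
    F nopt - F n ≤ V * K * Real.log (2 - pmin) := by
  have h1 : F nopt ≤ F ntilde := hntildeopt nopt hnopt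
  have key : ∀ e : E, Real.log (1 - (1 - p e) ^ ntilde e) - Real.log (1 - (1 - p e) ^ n e)
      ≤ Real.log (2 - pmin) := by
    intro e
    obtain ⟨hpe, hpe1⟩ := hp e
    set a := 1 - p e with ha
    have ha0 : 0 < a := by simp [ha]; linarith
    have ha1 : a < 1 := by simp [ha]; linarith
    obtain ⟨hn1, hnn, hnn1⟩ := hround e
    have hne : (0:ℝ) < a ^ n e := Real.rpow_pos_of_pos ha0 _
    have h_an : a ^ n e ≤ a := by
      have := Real.rpow_le_rpow_of_exponent_ge ha0 ha1.le hn1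
      simpa using this
    have h_ant2 : a * a ^ n e ≤ a ^ ntilde e := by
      have := Real.rpow_le_rpow_of_exponent_ge ha0 ha1.le hnn1
      rwa [Real.rpow_add ha0, Real.rpow_one, mul_comm] at this
    have hpos_n : 0 < 1 - a ^ n e := by linarith
    have h_ant : a ^ ntilde e ≤ a ^ n e := Real.rpow_le_rpow_of_exponent_ge ha0 ha1.le hnn
    have hpos_t : 0 < 1 - a ^ ntilde e := by linarith
    have hprod : 1 - a ^ ntilde e ≤ (1 + a) * (1 - a ^ n e) := by nlinarith
    have hlog : Real.log (1 - a ^ ntilde e) ≤ Real.log ((1 + a) * (1 - a ^ n e)) :=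
      Real.log_le_log hpos_t hprod
    rw [Real.log_mul (by positivity) (ne_of_gt hpos_n)] at hlog
    have h2a : Real.log (1 + a) ≤ Real.log (2 - pmin) := by
      apply Real.log_le_log (by positivity)
      simp [ha]; linarith
    linarith
  have hlogpos : 0 ≤ Real.log (2 - pmin) := Real.log_nonneg (by linarith)
  have hsum : ∑ e, Real.log (1 - (1 - p e) ^ ntilde e) - ∑ e, Real.log (1 - (1 - p e) ^ n e)
      ≤ (K : ℝ) * Real.log (2 - pmin) := by
    rw [← Finset.sum_sub_distrib]
    calc ∑ e, (Real.log (1 - (1 - p e) ^ ntilde e) - Real.log (1 - (1 - p e) ^ n e))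
        ≤ ∑ _e : E, Real.log (2 - pmin) := Finset.sum_le_sum fun e _ => key e
      _ = (Fintype.card E : ℝ) * Real.log (2 - pmin) := by
          rw [Finset.sum_const, nsmul_eq_mul]; rfl
      _ ≤ (K : ℝ) * Real.log (2 - pmin) := by
          apply mul_le_mul_of_nonneg_right _ hlogpos
          exact_mod_cast hK
  have h2 : F ntilde - F n ≤ V * K * Real.log (2 - pmin) := by
    rw [hF ntilde, hF n]
    have hV' := mul_le_mul_of_nonneg_left hsum hV
    have hq' := mul_le_mul_of_nonneg_left hcost hq
    nlinarith
  linarith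
end

section
/- Let T ≥ 1 be a natural number, C a real, D ≥ 0 a real, and q, c : ℕ → ℝ with q(0) ≥ 0 and q(t+1) = max(0, q(t) + c(t) - C/T) for all t. If q(t+1)^2 - q(t)^2 ≤ 2·D for every t < T, then (1/T)·∑_{t=0}^{T-1} c(t) - C/T ≤ sqrt( q(0)^2/T^2 + 2·D/T ) - q(0)/T. -/
/-! Dropping the `max 0` gives `q (t+1) ≥ q t + c t - C/T`, so the total budget excess
`∑ c - C` telescopes to at most `q T - q 0`; telescoping the drift bound gives
`q T ² ≤ q 0 ² + 2DT`. Dividing by `T` yields the claim. -/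

open Finset

section Telescoping

variable {α : Type*} [AddCommGroup α] [PartialOrder α] [IsOrderedAddMonoid α]
  {a f : ℕ → α} {n : ℕ}

theorem Finset.sum_range_le_sub_of_le_sub (h : ∀ t < n, a t ≤ f (t + 1) - f t) :
    ∑ t ∈ range n, a t ≤ f n - f 0 :=
  sum_range_sub f n ▸ sum_le_sum fun t ht => h t (mem_range.1 ht)

theorem Finset.sub_le_sum_range_of_sub_le (h : ∀ t < n, f (t + 1) - f t ≤ a t) :
    f n - f 0 ≤ ∑ t ∈ range n, a t :=
  sum_range_sub f n ▸ sum_le_sum fun t ht => h t (mem_range.1 ht)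

end Telescoping

theorem budget_violation_bound_general (T : ℕ) (hT : 1 ≤ T) (C D : ℝ) (q c : ℕ → ℝ)
    (hdyn : ∀ t, q (t + 1) = max 0 (q t + c t - C / T))
    (hdrift : ∀ t < T, q (t + 1) ^ 2 - q t ^ 2 ≤ 2 * D) :
    (1 / T) * ∑ t ∈ Finset.range T, c t - C / T
      ≤ Real.sqrt (q 0 ^ 2 / T ^ 2 + 2 * D / T) - q 0 / T := by
  have hTpos : (0 : ℝ) < T := by exact_mod_cast hT
  have hexcess : ∑ t ∈ range T, c t - C ≤ q T - q 0 := by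
    have := sum_range_le_sub_of_le_sub (a := fun t => c t - C / T) (f := q) (n := T)
      fun t _ => by rw [hdyn t]; linarith [le_max_right 0 (q t + c t - C / T)]
    rwa [sum_sub_distrib, sum_const, card_range, nsmul_eq_mul, mul_div_cancel₀ _ hTpos.ne']
      at this
  have hqT : q T ≤ √(q 0 ^ 2 + T * (2 * D)) := by
    refine Real.le_sqrt_of_sq_le ?_
    have := sub_le_sum_range_of_sub_le (f := fun t => q t ^ 2) hdrift
    rw [sum_const, card_range, nsmul_eq_mul] at this
    linarith
  have hsqrt : √(q 0 ^ 2 / T ^ 2 + 2 * D / T) = √(q 0 ^ 2 + T * (2 * D)) / T := by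
    rw [show q 0 ^ 2 / T ^ 2 + 2 * D / T = (q 0 ^ 2 + T * (2 * D)) / T ^ 2 by field_simp,
      Real.sqrt_div' _ (sq_nonneg _), Real.sqrt_sq hTpos.le]
  rw [hsqrt, one_div_mul_eq_div, div_sub_div_same, div_sub_div_same]
  gcongr ?_ / _
  linarith

/-- Core of Theorem 1: with the virtual-queue update `q(t+1) = max(0, q(t) + c(t) - C/T)`,
a per-slot drift bound `q(t+1)² - q(t)² ≤ 2D` implies the budget-violation bound
`(1/T)·∑_{t<T} c(t) - C/T ≤ sqrt(q(0)²/T² + 2D/T) - q(0)/T`. -/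
theorem budget_violation_bound (T : ℕ) (hT : 1 ≤ T) (C D : ℝ) (hD : 0 ≤ D)
    (q c : ℕ → ℝ) (hq0 : 0 ≤ q 0)
    (hdyn : ∀ t, q (t + 1) = max 0 (q t + c t - C / T))
    (hdrift : ∀ t < T, q (t + 1) ^ 2 - q t ^ 2 ≤ 2 * D) :
    (1 / T) * ∑ t ∈ Finset.range T, c t - C / T
      ≤ Real.sqrt (q 0 ^ 2 / T ^ 2 + 2 * D / T) - q 0 / T :=
  budget_violation_bound_general T hT C D q c hdyn hdrift
end

section
/- Let (Ω, μ) be a probability space, T ≥ 1 a natural number, C a real, V > 0, B, Δ reals, and q₀ ≥ 0 a real. Let u, c, û, ĉ : ℕ → Ω → ℝ and q : ℕ → Ω → ℝ be such that for every t < T the functions u(t), û(t), q(t)·c(t), q(t)·ĉ(t), q(t) are integrable, q(0)(ω) = q₀ for all ω, and for μ-almost every ω and every t < T: (i) q(t+1)(ω) = max(0, q(t)(ω) + c(t)(ω) - C/T), (ii) ½(q(t+1)(ω)^2 - q(t)(ω)^2) ≤ q(t)(ω)·(c(t)(ω) - C/T) + B, and (iii) V·u(t)(ω) - q(t)(ω)·c(t)(ω)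 ≥ V·û(t)(ω) - q(t)(ω)·ĉ(t)(ω) - Δ. Suppose moreover that ∫ q(t)·(C/T - ĉ(t)) dμ = 0 for every t < T. Then (1/T)·∑_{t=0}^{T-1} ∫ u(t) dμ ≥ (1/T)·∑_{t=0}^{T-1} ∫ û(t) dμ - (Δ + B)/V - q₀^2/(2·V·T). -/
/-!
Drift-plus-penalty. In every slot the drift bound and Δ-optimality of the online decision give
`V û + q (C/T - ĉ) + ½ (q(t+1)² - q(t)²) - (B + Δ) ≤ V u`. Summing over the slots telescopes the
quadratic Lyapunov terms to `½ (q(T)² - q₀²) ≥ -½ q₀²`, and taking expectations removes the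
cross terms `q (C/T - ĉ)`, which have mean zero. Dividing by `V T` gives the bound.
-/

open MeasureTheory Finset

theorem sum_le_sum_add_of_drift_plus_penalty {T : ℕ} {V B Δ d : ℝ}
    {q c u uhat chat : ℕ → ℝ}
    (hdrift : ∀ t < T, (1 / 2) * (q (t + 1) ^ 2 - q t ^ 2) ≤ q t * (c t - d) + B)
    (hopt : ∀ t < T, V * u t - q t * c t ≥ V * uhat t - q t * chat t - Δ) :
    ∑ t ∈ range T, (V * uhat t + q t * (d - chat t))
      ≤ ∑ t ∈ range T, V * u t + (q 0 ^ 2 / 2 + T * (B + Δ)) := by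
  have hslot : ∀ t ∈ range T, V * uhat t + q t * (d - chat t)
      ≤ V * u t + (q t ^ 2 / 2 - q (t + 1) ^ 2 / 2) + (B + Δ) := by
    intro t ht
    have := hdrift t (mem_range.mp ht)
    have := hopt t (mem_range.mp ht)
    linarith
  have htelescope : ∑ t ∈ range T, (q t ^ 2 / 2 - q (t + 1) ^ 2 / 2) = q 0 ^ 2 / 2 - q T ^ 2 / 2 :=
    sum_range_sub' (fun t => q t ^ 2 / 2) T
  calc ∑ t ∈ range T, (V * uhat t + q t * (d - chat t))
      ≤ ∑ t ∈ range T, (V * u t + (q t ^ 2 / 2 - q (t + 1) ^ 2 / 2) + (B + Δ)) := sum_le_sum hslot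
    _ = ∑ t ∈ range T, V * u t + (q 0 ^ 2 / 2 - q T ^ 2 / 2) + T * (B + Δ) := by
      rw [sum_add_distrib, sum_add_distrib, htelescope, sum_const, card_range, nsmul_eq_mul]
    _ ≤ ∑ t ∈ range T, V * u t + (q 0 ^ 2 / 2 + T * (B + Δ)) := by nlinarith [sq_nonneg (q T)]

theorem sum_integral_le_sum_integral_add_of_ae {Ω : Type*} [MeasurableSpace Ω] {μ : Measure Ω}
    [IsProbabilityMeasure μ] {T : ℕ} {f g : ℕ → Ω → ℝ} (K : ℝ)
    (hf : ∀ t < T, Integrable (f t) μ) (hg : ∀ t < T, Integrable (g t) μ)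
    (hfg : ∀ᵐ ω ∂μ, ∑ t ∈ range T, f t ω ≤ ∑ t ∈ range T, g t ω + K) :
    ∑ t ∈ range T, ∫ ω, f t ω ∂μ ≤ ∑ t ∈ range T, ∫ ω, g t ω ∂μ + K := by
  have hf' : ∀ t ∈ range T, Integrable (f t) μ := fun t ht => hf t (mem_range.mp ht)
  have hg' : ∀ t ∈ range T, Integrable (g t) μ := fun t ht => hg t (mem_range.mp ht)
  have hsum_f : ∫ ω, ∑ t ∈ range T, f t ω ∂μ = ∑ t ∈ range T, ∫ ω, f t ω ∂μ :=
    integral_finsetSum _ hf'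
  have hsum_g : ∫ ω, (∑ t ∈ range T, g t ω + K) ∂μ = ∑ t ∈ range T, ∫ ω, g t ω ∂μ + K := by
    rw [integral_add (integrable_finsetSum _ hg') (integrable_const K), integral_const,
      probReal_univ, one_smul, integral_finsetSum _ hg']
  rw [← hsum_f, ← hsum_g]
  exact integral_mono_ae (integrable_finsetSum _ hf')
    ((integrable_finsetSum _ hg').add (integrable_const K)) hfg

theorem average_ge_of_mul_sum_le_add {T V B Δ q₀ U Û : ℝ} (hV : 0 < V) (hT : 0 < T)
    (h : V * Û ≤ V * U + (q₀ ^ 2 / 2 + T * (B + Δ))) :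
    (1 / T) * U ≥ (1 / T) * Û - (Δ + B) / V - q₀ ^ 2 / (2 * V * T) := by
  rw [ge_iff_le, ← sub_nonneg]
  have hgap : (1 / T) * U - ((1 / T) * Û - (Δ + B) / V - q₀ ^ 2 / (2 * V * T))
      = (V * U + (q₀ ^ 2 / 2 + T * (B + Δ)) - V * Û) / (V * T) := by
    field_simp
    ring
  rw [hgap]
  exact div_nonneg (by linarith) (by positivity)

theorem theorem2_expected_general {Ω : Type*} [MeasurableSpace Ω] (μ : Measure Ω)
    [IsProbabilityMeasure μ]
    (T : ℕ) (hT : 1 ≤ T) (C : ℝ) (V : ℝ) (hV : 0 < V) (B Δ : ℝ) (q₀ : ℝ)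
    (u c uhat chat : ℕ → Ω → ℝ) (q : ℕ → Ω → ℝ)
    (hint_u : ∀ t < T, Integrable (u t) μ)
    (hint_uhat : ∀ t < T, Integrable (uhat t) μ)
    (hint_qchat : ∀ t < T, Integrable (fun ω => q t ω * chat t ω) μ)
    (hint_q : ∀ t < T, Integrable (q t) μ)
    (hq0 : ∀ ω, q 0 ω = q₀)
    (hae : ∀ᵐ ω ∂μ, ∀ t < T,
      q (t + 1) ω = max 0 (q t ω + c t ω - C / T) ∧
      (1 / 2) * (q (t + 1) ω ^ 2 - q t ω ^ 2) ≤ q t ω * (c t ω - C / T) + B ∧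
      V * u t ω - q t ω * c t ω ≥ V * uhat t ω - q t ω * chat t ω - Δ)
    (hindep : ∀ t < T, ∫ ω, q t ω * (C / T - chat t ω) ∂μ = 0) :
    (1 / T) * ∑ t ∈ Finset.range T, ∫ ω, u t ω ∂μ
      ≥ (1 / T) * ∑ t ∈ Finset.range T, ∫ ω, uhat t ω ∂μ
        - (Δ + B) / V - q₀ ^ 2 / (2 * V * T) := by
  have hint_cross : ∀ t < T, Integrable (fun ω => q t ω * (C / T - chat t ω)) μ := fun t ht => by
    convert ((hint_q t ht).mul_const (C / T)).sub (hint_qchat t ht) using 1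
    ext ω
    simp only [Pi.sub_apply, mul_sub]
  have hpathwise : ∀ᵐ ω ∂μ, ∑ t ∈ range T, (V * uhat t ω + q t ω * (C / T - chat t ω))
      ≤ ∑ t ∈ range T, V * u t ω + (q₀ ^ 2 / 2 + T * (B + Δ)) := by
    filter_upwards [hae] with ω hω
    rw [← hq0 ω]
    exact sum_le_sum_add_of_drift_plus_penalty (fun t ht => (hω t ht).2.1)
      (fun t ht => (hω t ht).2.2)
  have hexpected := sum_integral_le_sum_integral_add_of_ae
    (f := fun t ω => V * uhat t ω + q t ω * (C / T - chat t ω)) _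
    (fun t ht => ((hint_uhat t ht).const_mul V).add (hint_cross t ht))
    (fun t ht => (hint_u t ht).const_mul V) hpathwise
  have hcross_vanish : ∀ t ∈ range T,
      ∫ ω, V * uhat t ω + q t ω * (C / T - chat t ω) ∂μ = V * ∫ ω, uhat t ω ∂μ := by
    intro t ht
    rw [integral_add ((hint_uhat t (mem_range.mp ht)).const_mul V) (hint_cross t (mem_range.mp ht)),
      hindep t (mem_range.mp ht), integral_const_mul, add_zero]
  rw [sum_congr rfl hcross_vanish] at hexpected
  simp only [integral_const_mul, ← mul_sum] at hexpected
  exact average_ge_of_mul_sum_le_add hV (by exact_mod_cast hT) hexpected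

/-- Theorem 2 of the paper: with Δ-optimal per-slot solutions, the expected
time-averaged online utility is within `(Δ+B)/V + q₀²/(2VT)` of the expected
offline optimum. -/
theorem theorem2_expected {Ω : Type*} [MeasurableSpace Ω] (μ : Measure Ω)
    [IsProbabilityMeasure μ]
    (T : ℕ) (hT : 1 ≤ T) (C : ℝ) (V : ℝ) (hV : 0 < V) (B Δ : ℝ) (q₀ : ℝ) (hq₀ : 0 ≤ q₀)
    (u c uhat chat : ℕ → Ω → ℝ) (q : ℕ → Ω → ℝ)
    (hint_u : ∀ t < T, Integrable (u t) μ)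
    (hint_uhat : ∀ t < T, Integrable (uhat t) μ)
    (hint_qc : ∀ t < T, Integrable (fun ω => q t ω * c t ω) μ)
    (hint_qchat : ∀ t < T, Integrable (fun ω => q t ω * chat t ω) μ)
    (hint_q : ∀ t < T, Integrable (q t) μ)
    (hq0 : ∀ ω, q 0 ω = q₀)
    (hae : ∀ᵐ ω ∂μ, ∀ t < T,
      q (t + 1) ω = max 0 (q t ω + c t ω - C / T) ∧
      (1 / 2) * (q (t + 1) ω ^ 2 - q t ω ^ 2) ≤ q t ω * (c t ω - C / T) + B ∧
      V * u t ω - q t ω * c t ω ≥ V * uhat t ω - q t ω * chat t ω - Δ)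
    (hindep : ∀ t < T, ∫ ω, q t ω * (C / T - chat t ω) ∂μ = 0) :
    (1 / T) * ∑ t ∈ Finset.range T, ∫ ω, u t ω ∂μ
      ≥ (1 / T) * ∑ t ∈ Finset.range T, ∫ ω, uhat t ω ∂μ
        - (Δ + B) / V - q₀ ^ 2 / (2 * V * T) :=
  theorem2_expected_general μ T hT C V hV B Δ q₀ u c uhat chat q hint_u hint_uhat hint_qchat hint_q
    hq0 hae hindep
end
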